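/- arXiv:1307.4456 — 2 statements merged into one kernel-verified Lean document; each statement's English description precedes it below -/
import Mathlib

section
/- For all integers b ≥ 1 and even Δ ≥ 4b, there exists a graph with diameter 2, arboricity at most b, maximum degree Δ, and at least bΔ/4 vertices. -/
/-- `G` has arboricity at most `b`: the edge set of `G` is the union of the edge
sets of `b` forests. -/
def ArboricityLE {V : Type*} (G : SimpleGraph V) (b : ℕ) : Prop :=
  ∃ F : Fin b → SimpleGraph V, (∀ i, (F i).IsAcyclic) ∧ (⨆ i, F i) = G

/-!
For `b ≤ 2` a star with `Δ` leaves works. Otherwise let `l = ⌊(b - 1)/2⌋`, so that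
`b ≤ 2 (l + 1)`, and write `Δ = 2 (l + t)`. Take an `(l + 1) × l` grid of hubs whose rows are
cliques and, for every row `r` and every `s < t`, a page adjacent to all hubs of row `r` and of
column `s mod l`. Any two vertices are adjacent or have a common neighbour; a hub has at most
`l + t + l (t / l + 1) ≤ Δ` neighbours, a page `2l + 1`; and there are `(l + 1)(l + t) ≥ bΔ/4`
vertices. The edges split into `2l + 1 ≤ b` depth-one forests, one per row (each page to the hub
of that row in its column, plus stars inside the other rows) and one per column (each page to the
hub of its row in that column).
-/
open Finset Function

namespace SimpleGraph

variable {V W : Type*} {G : SimpleGraph V} {G' : SimpleGraph W} {u v w : V}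

lemma Hom.edist_le (f : G →g G') (u v : V) : G'.edist (f u) (f v) ≤ G.edist u v := by
  by_cases huv : G.Reachable u v
  · obtain ⟨p, hp⟩ := huv.exists_walk_length_eq_edist
    exact hp ▸ (SimpleGraph.edist_le (p.map f)).trans_eq (by rw [Walk.length_map])
  · simp [edist_eq_top_of_not_reachable huv]

lemma Iso.ncard_neighborSet (f : G ≃g G') (v : V) :
    (G'.neighborSet (f v)).ncard = (G.neighborSet v).ncard := by
  rw [← f.image_neighborSet, Set.ncard_image_of_injective _ f.injective]

lemma edist_le_two_of_adj_of_adj (h₁ : G.Adj u w) (h₂ : G.Adj w v) : G.edist u v ≤ 2 :=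
  (edist_le (.cons h₁ (.cons h₂ .nil))).trans_eq rfl

lemma Adj.edist_le_two (h : G.Adj u v) : G.edist u v ≤ 2 :=
  (edist_le (.cons h .nil)).trans (by norm_num)

lemma IsUniversal.edist_le_two (h : G.IsUniversal w) (u v : V) : G.edist u v ≤ 2 := by
  have hle (x : V) : G.edist w x ≤ 1 :=
    edist_le_one_iff_adj_or_eq.2 ((em (w = x)).elim .inr fun hx => .inl (h hx))
  calc G.edist u v ≤ G.edist u w + G.edist w v := SimpleGraph.edist_triangle
    _ ≤ 1 + 1 := by rw [edist_comm]; exact add_le_add (hle u) (hle v)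
    _ = 2 := by norm_num

lemma connected_of_edist_le_two [Nonempty V] (h : ∀ u v, G.edist u v ≤ 2) : G.Connected :=
  ⟨fun u v => reachable_of_edist_ne_top (ne_top_of_le_ne_top (by decide) (h u v))⟩

lemma dist_le_two_of_edist_le_two (h : G.edist u v ≤ 2) : G.dist u v ≤ 2 :=
  ENat.toNat_le_of_le_natCast h

lemma isAcyclic_fromRel_of_parent (p : V → Option V) (hp : ∀ u v, p u = some v → p v = none) :
    (fromRel fun u v => p u = some v).IsAcyclic := by
  rw [isAcyclic_iff_forall_adj_isBridge]
  suffices key :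
      ∀ u v, u ≠ v → p u = some v → (fromRel fun u v => p u = some v).IsBridge s(u, v) by
    intro u v huv
    rw [fromRel_adj] at huv
    rcases huv with ⟨hne, h | h⟩
    · exact key u v hne h
    · exact Sym2.eq_swap ▸ key v u hne.symm h
  intro u v hne hu
  refine not_reachable_of_neighborSet_left_eq_empty hne (Set.eq_empty_of_forall_notMem ?_)
  intro x hx
  simp only [mem_neighborSet, deleteEdges_adj, fromRel_adj, Set.mem_singleton_iff] at hx
  obtain ⟨⟨-, hx | hx⟩, hxv⟩ := hx
  · exact hxv (by rw [Option.some_injective _ (hu.symm.trans hx)])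
  · exact absurd (hp x u hx) (by simp [hu])

lemma ncard_neighborSet_lt_card [Finite V] (G : SimpleGraph V) (v : V) :
    (G.neighborSet v).ncard < Nat.card V := by
  rw [← Set.ncard_univ]
  exact Set.ncard_lt_ncard <|
    Set.ssubset_univ_iff.2 fun h => G.irrefl (Set.eq_univ_iff_forall.1 h v)

end SimpleGraph

open SimpleGraph

section Arboricity

variable {V W : Type*} {G : SimpleGraph V} {b : ℕ}

lemma arboricityLE_of_iSup_eq {ι : Type*} [Fintype ι] (F : ι → SimpleGraph V)
    (hF : ∀ i, (F i).IsAcyclic) (hG : ⨆ i, F i = G) (hι : Fintype.card ι ≤ b) :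
    ArboricityLE G b := by
  classical
  let e : ι ↪ Fin b := (Fintype.equivFin ι).toEmbedding.trans (Fin.castLEEmb hι)
  refine ⟨extend e F ⊥, fun k => ?_, (iSup_extend_bot e.injective F).trans hG⟩
  by_cases hk : ∃ i, e i = k
  · obtain ⟨i, rfl⟩ := hk
    rw [e.injective.extend_apply]
    exact hF i
  · rw [extend_apply' _ _ _ hk]
    exact isAcyclic_bot

lemma ArboricityLE.of_iso {G' : SimpleGraph W} (f : G ≃g G') (h : ArboricityLE G b) :
    ArboricityLE G' b := by
  obtain ⟨F, hF, hG⟩ := h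
  refine ⟨fun i => (F i).comap f.symm.toEquiv.toEmbedding, fun i => (hF i).of_comap _, ?_⟩
  ext x y
  simp only [iSup_adj, comap_adj]
  rw [← iSup_adj, hG]
  exact f.symm.map_adj_iff

end Arboricity

section CrossGraph

variable {R C S : Type*}

-- `inl (r, c)` is the hub in row `r` and column `c`, `inr (r, s)` a page.
def crossGraph (col : S → C) : SimpleGraph ((R × C) ⊕ (R × S)) where
  Adj
    | .inl (r, c), .inl (r', c') => r = r' ∧ c ≠ c'
    | .inl (r, c), .inr (i, s) | .inr (i, s), .inl (r, c) => r = i ∨ c = col s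
    | .inr _, .inr _ => False
  symm := ⟨by
    rintro (⟨r, c⟩ | ⟨i, s⟩) (⟨r', c'⟩ | ⟨i', s'⟩) h
    · exact ⟨h.1.symm, h.2.symm⟩
    all_goals exact h⟩
  loopless := ⟨by
    rintro (⟨r, c⟩ | ⟨i, s⟩) h
    · exact h.2 rfl
    · exact h⟩

namespace crossGraph

variable (col : S → C)

@[simp] lemma adj_inl_inl {r r' : R} {c c' : C} :
    (crossGraph col).Adj (.inl (r, c)) (.inl (r', c')) ↔ r = r' ∧ c ≠ c' := .rfl

@[simp] lemma adj_inl_inr {r i : R} {c : C} {s : S} :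
    (crossGraph col).Adj (.inl (r, c)) (.inr (i, s)) ↔ r = i ∨ c = col s := .rfl

@[simp] lemma adj_inr_inl {r i : R} {c : C} {s : S} :
    (crossGraph col).Adj (.inr (i, s)) (.inl (r, c)) ↔ r = i ∨ c = col s := .rfl

@[simp] lemma not_adj_inr_inr {i i' : R} {s s' : S} :
    ¬ (crossGraph col).Adj (.inr (i, s)) (.inr (i', s')) := id

lemma edist_le_two (hcol : Surjective col) (u v : (R × C) ⊕ (R × S)) :
    (crossGraph col).edist u v ≤ 2 := by
  rcases u with ⟨a, c⟩ | ⟨i, s⟩ <;> rcases v with ⟨a', c'⟩ | ⟨i', s'⟩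
  · obtain ⟨s, rfl⟩ := hcol c'
    exact edist_le_two_of_adj_of_adj (w := .inr (a, s)) (.inl rfl) (.inr rfl)
  · by_cases h : a = i' ∨ c = col s'
    · exact Adj.edist_le_two h
    · rw [not_or] at h
      exact edist_le_two_of_adj_of_adj (w := .inl (a, col s')) ⟨rfl, h.2⟩ (.inr rfl)
  · by_cases h : a' = i ∨ c' = col s
    · exact Adj.edist_le_two h
    · rw [not_or] at h
      exact edist_le_two_of_adj_of_adj (w := .inl (a', col s)) (.inr rfl) ⟨rfl, Ne.symm h.2⟩
  · exact edist_le_two_of_adj_of_adj (w := .inl (i, col s')) (.inl rfl) (.inr rfl)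

section Forests

variable [DecidableEq C]

/-- Parent maps of the forests covering `crossGraph col`. Forest `inl (some c)` also hangs each
hub `(r, y)` with `r ≠ some c` below `(r, c)`, so a row-clique edge `(r, c) (r, c')` lies in
forest `inl (some c')` unless `r = some c'`, and then in `inl (some c)`. -/
def parent : Option C ⊕ C → (Option C × C) ⊕ (Option C × S) →
    Option ((Option C × C) ⊕ (Option C × S))
  | .inl a, .inr (_, s) => some (.inl (a, col s))
  | .inl (some c), .inl (r, y) => if r ≠ some c ∧ y ≠ c then some (.inl (r, c)) else none
  | .inl none, .inl _ => none
  | .inr c, .inr (i, _) => some (.inl (i, c))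
  | .inr _, .inl _ => none

lemma parent_parent_eq_none {k : Option C ⊕ C} {u v : (Option C × C) ⊕ (Option C × S)}
    (h : parent col k u = some v) : parent col k v = none := by
  rcases k with (_ | c) | c <;> rcases u with ⟨r, y⟩ | ⟨i, s⟩ <;> grind [parent]

lemma adj_of_parent_eq_some {k : Option C ⊕ C} {u v : (Option C × C) ⊕ (Option C × S)}
    (h : parent col k u = some v) : (crossGraph col).Adj u v := by
  rcases k with (_ | c) | c <;> rcases u with ⟨r, y⟩ | ⟨i, s⟩ <;>
    grind [parent, adj_inl_inl, adj_inr_inl]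

lemma exists_parent_eq_some {u v : (Option C × C) ⊕ (Option C × S)}
    (h : (crossGraph col).Adj u v) :
    ∃ k, parent col k u = some v ∨ parent col k v = some u := by
  rcases u with ⟨r, c⟩ | ⟨i, s⟩ <;> rcases v with ⟨r', c'⟩ | ⟨i', s'⟩
  · obtain ⟨rfl, hc⟩ : r = r' ∧ c ≠ c' := h
    by_cases hr : r = some c'
    · refine ⟨.inl (some c), .inr ?_⟩
      simp [parent, hr, Ne.symm hc]
    · exact ⟨.inl (some c'), .inl (by simp [parent, hr, hc])⟩
  · rcases (h : r = i' ∨ c = col s') with rfl | rfl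
    · exact ⟨.inr c, .inr rfl⟩
    · exact ⟨.inl r, .inr rfl⟩
  · rcases (h : r' = i ∨ c' = col s) with rfl | rfl
    · exact ⟨.inr c', .inl rfl⟩
    · exact ⟨.inl r', .inl rfl⟩
  · exact absurd h (not_adj_inr_inr col)

lemma arboricityLE [Fintype C] {b : ℕ} (hb : 2 * Fintype.card C + 1 ≤ b) :
    ArboricityLE (crossGraph (R := Option C) col) b := by
  refine arboricityLE_of_iSup_eq (fun k => fromRel fun u v => parent col k u = some v)
    (fun k => isAcyclic_fromRel_of_parent _ fun _ _ => parent_parent_eq_none col) ?_ ?_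
  · ext u v
    simp only [iSup_adj, fromRel_adj]
    refine ⟨fun ⟨k, hne, h⟩ => h.elim (adj_of_parent_eq_some col) fun h => ?_, fun h => ?_⟩
    · exact (adj_of_parent_eq_some col h).symm
    · obtain ⟨k, hk⟩ := exists_parent_eq_some col h
      exact ⟨k, h.ne, hk⟩
  · simp only [Fintype.card_sum, Fintype.card_option]
    omega

end Forests

section Degrees

variable [Fintype R] [Fintype C] [Fintype S]

lemma ncard_neighborSet_inl_le (a : R) (c : C) :
    ((crossGraph col).neighborSet (.inl (a, c))).ncard ≤
      Fintype.card C + (Fintype.card S + (Fintype.card R - 1) * (col ⁻¹' {c}).ncard) := by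
  classical
  let T : Finset ((R × C) ⊕ (R × S)) := univ.image (fun y => .inl (a, y)) ∪
    ({a} ×ˢ univ ∪ univ.erase a ×ˢ (col ⁻¹' {c}).toFinset).image .inr
  have hsub : (crossGraph col).neighborSet (.inl (a, c)) ⊆ T := by
    rintro (⟨r, y⟩ | ⟨i, s⟩) h <;> simp only [mem_neighborSet] at h
    · simp [T, h.1]
    · by_cases hi : i = a <;> simp_all [T, eq_comm]
  calc _ ≤ (T : Set _).ncard := Set.ncard_le_ncard hsub
    _ = #T := Set.ncard_coe_finset T
    _ ≤ _ := by
      refine (card_union_le _ _).trans (add_le_add card_image_le (card_image_le.trans ?_))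
      refine (card_union_le _ _).trans_eq ?_
      simp [Set.ncard_eq_toFinset_card']

lemma ncard_neighborSet_inr_le (i : R) (s : S) :
    ((crossGraph col).neighborSet (.inr (i, s))).ncard ≤ Fintype.card C + Fintype.card R := by
  classical
  let T : Finset ((R × C) ⊕ (R × S)) := ({i} ×ˢ univ ∪ univ ×ˢ {col s}).image .inl
  have hsub : (crossGraph col).neighborSet (.inr (i, s)) ⊆ T := by
    rintro (⟨r, c⟩ | ⟨i', s'⟩) h <;> simp only [mem_neighborSet] at h
    · rcases h with rfl | rfl <;> simp [T]
    · exact absurd h (not_adj_inr_inr col)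
  calc _ ≤ (T : Set _).ncard := Set.ncard_le_ncard hsub
    _ = #T := Set.ncard_coe_finset T
    _ ≤ _ := card_image_le.trans ((card_union_le _ _).trans_eq (by simp))

end Degrees

end crossGraph

end CrossGraph

namespace Fin

lemma ncard_preimage_ofNat_le {l : ℕ} [NeZero l] (t : ℕ) (c : Fin l) :
    ((fun s : Fin t => Fin.ofNat l s) ⁻¹' {c}).ncard ≤ t / l + 1 := by
  have hmod : ∀ s : Fin t, Fin.ofNat l s = c → s % l = c := fun s hs => by
    rw [← hs, Fin.val_ofNat]
  calc _ ≤ ((range (t / l + 1) : Finset ℕ) : Set ℕ).ncard := by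
        refine Set.ncard_le_ncard_of_injOn (fun s : Fin t => s / l) (fun s _ => ?_) ?_
        · simpa [Nat.lt_succ_iff] using Nat.div_le_div_right s.2.le
        · intro s hs s' hs' h
          simp only [Set.mem_preimage, Set.mem_singleton_iff] at hs hs' h
          rw [Fin.ext_iff, ← Nat.div_add_mod s l, ← Nat.div_add_mod s' l, h, hmod s hs,
            hmod s' hs']
    _ = t / l + 1 := by simp

lemma surjective_ofNat {l t : ℕ} [NeZero l] (h : l ≤ t) :
    Surjective fun s : Fin t => Fin.ofNat l s :=
  fun c => ⟨⟨c, c.2.trans_le h⟩, by ext; simp⟩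

end Fin

abbrev modCrossGraph (l t : ℕ) [NeZero l] :
    SimpleGraph ((Option (Fin l) × Fin l) ⊕ (Option (Fin l) × Fin t)) :=
  crossGraph fun s : Fin t => Fin.ofNat l s

namespace modCrossGraph

variable {l t : ℕ}

lemma card_vertices :
    Fintype.card ((Option (Fin l) × Fin l) ⊕ (Option (Fin l) × Fin t)) = (l + 1) * (l + t) := by
  simp [mul_add]

lemma ncard_neighborSet_le [NeZero l] (h : l ≤ t)
    (v : (Option (Fin l) × Fin l) ⊕ (Option (Fin l) × Fin t)) :
    ((modCrossGraph l t).neighborSet v).ncard ≤ 2 * (l + t) := by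
  rcases v with ⟨a, c⟩ | ⟨i, s⟩
  · refine (crossGraph.ncard_neighborSet_inl_le _ a c).trans ?_
    have hfib := Fin.ncard_preimage_ofNat_le t c
    have hdiv : l * (t / l) ≤ t := Nat.mul_div_le t l
    simp only [Fintype.card_fin, Fintype.card_option, Nat.add_sub_cancel]
    nlinarith
  · refine (crossGraph.ncard_neighborSet_inr_le _ i s).trans ?_
    simp only [Fintype.card_fin, Fintype.card_option]
    have := NeZero.pos l
    omega

end modCrossGraph

lemma exists_fin_of_edist_le_two {V : Type*} [Fintype V] [Nonempty V] (G : SimpleGraph V)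
    {b Δ : ℕ} (hdiam : ∀ u v, G.edist u v ≤ 2) (harb : ArboricityLE G b)
    (hdeg : ∀ v, (G.neighborSet v).ncard ≤ Δ) (hcard : (b * Δ : ℚ) / 4 ≤ Fintype.card V) :
    ∃ (n : ℕ) (G : SimpleGraph (Fin n)), G.Connected ∧ (∀ u v, G.dist u v ≤ 2) ∧
      ArboricityLE G b ∧ (∀ v, (G.neighborSet v).ncard ≤ Δ) ∧
      (b * Δ : ℚ) / 4 ≤ n := by
  let f := G.overFinIso rfl
  have : Nonempty (Fin (Fintype.card V)) := ⟨f (Classical.arbitrary V)⟩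
  have hdiam' (x y : Fin (Fintype.card V)) : (G.overFin rfl).edist x y ≤ 2 := by
    simpa using (f.toHom.edist_le (f.symm x) (f.symm y)).trans (hdiam _ _)
  refine ⟨_, G.overFin rfl, connected_of_edist_le_two hdiam',
    fun x y => dist_le_two_of_edist_le_two (hdiam' x y), harb.of_iso f, fun x => ?_, hcard⟩
  rw [← f.apply_symm_apply x, f.ncard_neighborSet]
  exact hdeg _

/-- For all integers `b ≥ 1` and even `Δ ≥ 4b`, there exists a graph with
diameter at most `2`, arboricity at most `b`, maximum degree at most `Δ`, and at
least `bΔ/4` vertices. -/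
theorem arboricity_diameter_two_lower_bound (b Δ : ℕ) (hb : 1 ≤ b) (hΔe : Even Δ)
    (hΔ : 4 * b ≤ Δ) :
    ∃ (n : ℕ) (G : SimpleGraph (Fin n)),
      G.Connected ∧
      (∀ u v, G.dist u v ≤ 2) ∧
      ArboricityLE G b ∧
      (∀ v, (G.neighborSet v).ncard ≤ Δ) ∧
      (b * Δ : ℚ) / 4 ≤ n := by
  by_cases hb2 : b ≤ 2
  · refine exists_fin_of_edist_le_two (starGraph (0 : Fin (Δ + 1)))
      isUniversal_starGraph_self.edist_le_two
      (arboricityLE_of_iSup_eq (fun _ : Fin 1 => _) (fun _ => isAcyclic_starGraph 0) iSup_const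
        (by simpa using hb))
      (fun v => Nat.le_of_lt_succ (by simpa using ncard_neighborSet_lt_card _ v)) ?_
    rw [Fintype.card_fin, div_le_iff₀ (by norm_num)]
    exact_mod_cast (by nlinarith : b * Δ ≤ (Δ + 1) * 4)
  · set l := (b - 1) / 2
    set t := Δ / 2 - l
    have : NeZero l := ⟨by omega⟩
    have hlt : l ≤ t := by omega
    have hΔ : Δ = 2 * (l + t) := by obtain ⟨k, rfl⟩ := hΔe; omega
    have : Nonempty ((Option (Fin l) × Fin l) ⊕ (Option (Fin l) × Fin t)) :=
      ⟨.inl (none, 0)⟩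
    refine exists_fin_of_edist_le_two (modCrossGraph l t)
      (crossGraph.edist_le_two _ (Fin.surjective_ofNat hlt))
      (crossGraph.arboricityLE _ (by simp only [Fintype.card_fin]; omega))
      (fun v => hΔ ▸ modCrossGraph.ncard_neighborSet_le hlt v) ?_
    rw [modCrossGraph.card_vertices, div_le_iff₀ (by norm_num)]
    have hbl : b ≤ 2 * (l + 1) := by omega
    exact_mod_cast (by rw [hΔ]; nlinarith : b * Δ ≤ (l + 1) * (l + t) * 4)
end

section
/- Let G be a graph on n vertices with maximum degree at most Δ ≥ 3 and diameter at most k, and suppose (A, S, B) is a partition of V(G) with |A| ≤ 2n/3, |B| ≤ 2n/3, |S| ≤ s, and no edges between A and B. If k is odd, then n ≤ 3s · M(Δ, (k−1)/2), where M(Δ, j) = 1 + Δ·∑_{i=1}^{j-1}(Δ−1)^i is the Moore bound (with M(Δ,0)=1). -/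
def mooreBound (Δ j : ℕ) : ℕ :=
  1 + Δ * ∑ i ∈ Finset.range j, (Δ - 1) ^ i

open Finset SimpleGraph

lemma exists_adj_dist {V : Type*} (G : SimpleGraph V) (hconn : G.Connected) {v u : V} {i : ℕ}
    (h : G.dist v u = i + 1) : ∃ w, G.Adj w u ∧ G.dist v w = i := by
  obtain ⟨p, hp⟩ := (hconn u v).exists_walk_length_eq_dist
  cases p with
  | nil =>
    simp only [SimpleGraph.Walk.length_nil] at hp
    rw [SimpleGraph.dist_comm] at h; omega
  | @cons _ w _ hadj q =>
    refine ⟨w, hadj.symm, ?_⟩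
    have h1 : G.dist v w ≤ i := by
      have := SimpleGraph.dist_le q.reverse
      simp only [SimpleGraph.Walk.length_reverse] at this
      have hlen : q.length = i := by
        simp only [SimpleGraph.Walk.length_cons] at hp
        rw [SimpleGraph.dist_comm] at h; omega
      omega
    have h2 : i ≤ G.dist v w := by
      have htri := hconn.dist_triangle (u := v) (v := w) (w := u)
      have hwu : G.dist w u = 1 := SimpleGraph.dist_eq_one_iff_adj.mpr hadj.symm
      omega
    omega

lemma sphere_bound {V : Type*} [Fintype V] [DecidableEq V] (G : SimpleGraph V) (Δ : ℕ)
    (hmax : ∀ v : V, (G.neighborSet v).ncard ≤ Δ) (hconn : G.Connected) (v : V) :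
    ∀ i : ℕ, (Finset.univ.filter fun u => G.dist v u = i + 1).card ≤ Δ * (Δ - 1) ^ i := by
  classical
  have hdeg : ∀ w : V, (G.neighborFinset w).card ≤ Δ := by
    intro w
    have := hmax w
    rw [SimpleGraph.neighborFinset_def, ← Set.ncard_coe_finset, Set.coe_toFinset]
    exact this
  intro i
  induction i with
  | zero =>
    simp only [pow_zero, mul_one]
    refine le_trans (Finset.card_le_card ?_) (hdeg v)
    intro u hu
    simp only [Finset.mem_filter] at hu
    rw [SimpleGraph.mem_neighborFinset]
    exact SimpleGraph.dist_eq_one_iff_adj.mp hu.2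
  | succ i ih =>
    have hsub : (Finset.univ.filter fun u => G.dist v u = i + 2) ⊆
        (Finset.univ.filter fun u => G.dist v u = i + 1).biUnion
          (fun w => G.neighborFinset w ∩ (Finset.univ.filter fun u => G.dist v u = i + 2)) := by
      intro u hu
      simp only [Finset.mem_filter] at hu
      obtain ⟨w, hadj, hw⟩ := exists_adj_dist G hconn hu.2
      refine Finset.mem_biUnion.mpr ⟨w, by simp [hw], ?_⟩
      simp [SimpleGraph.mem_neighborFinset, hadj, hu.2]
    have hbound : ∀ w ∈ (Finset.univ.filter fun u => G.dist v u = i + 1),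
        (G.neighborFinset w ∩ (Finset.univ.filter fun u => G.dist v u = i + 2)).card ≤ Δ - 1 := by
      intro w hw
      simp only [Finset.mem_filter] at hw
      obtain ⟨x, hadj, hx⟩ := exists_adj_dist G hconn hw.2
      have hxmem : x ∈ G.neighborFinset w := by
        rw [SimpleGraph.mem_neighborFinset]; exact hadj.symm
      have hsub2 : G.neighborFinset w ∩ (Finset.univ.filter fun u => G.dist v u = i + 2) ⊆
          (G.neighborFinset w).erase x := by
        intro y hy
        simp only [Finset.mem_inter, Finset.mem_filter] at hy
        refine Finset.mem_erase.mpr ⟨?_, hy.1⟩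
        rintro rfl; omega
      calc _ ≤ ((G.neighborFinset w).erase x).card := Finset.card_le_card hsub2
        _ = (G.neighborFinset w).card - 1 := Finset.card_erase_of_mem hxmem
        _ ≤ Δ - 1 := Nat.sub_le_sub_right (hdeg w) 1
    calc (Finset.univ.filter fun u => G.dist v u = i + 2).card
        ≤ _ := Finset.card_le_card hsub
      _ ≤ (Finset.univ.filter fun u => G.dist v u = i + 1).card * (Δ - 1) :=
          Finset.card_biUnion_le_card_mul _ _ _ hbound
      _ ≤ (Δ * (Δ - 1) ^ i) * (Δ - 1) := Nat.mul_le_mul_right _ ih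
      _ = Δ * (Δ - 1) ^ (i + 1) := by ring

lemma ball_bound {V : Type*} [Fintype V] [DecidableEq V] (G : SimpleGraph V) (Δ : ℕ)
    (hmax : ∀ v : V, (G.neighborSet v).ncard ≤ Δ) (hconn : G.Connected) (v : V) (r : ℕ) :
    (Finset.univ.filter fun u => G.dist v u ≤ r).card ≤ mooreBound Δ r := by
  classical
  induction r with
  | zero =>
    have : (Finset.univ.filter fun u => G.dist v u ≤ 0) = {v} := by
      ext u
      simp only [Finset.mem_filter, Finset.mem_univ, true_and, Finset.mem_singleton,
        Nat.le_zero, hconn.dist_eq_zero_iff]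
      exact eq_comm
    rw [this]
    simp [mooreBound]
  | succ r ih =>
    have hsplit : (Finset.univ.filter fun u => G.dist v u ≤ r + 1) =
        (Finset.univ.filter fun u => G.dist v u ≤ r) ∪
        (Finset.univ.filter fun u => G.dist v u = r + 1) := by
      ext u
      simp only [Finset.mem_filter, Finset.mem_union, Finset.mem_univ, true_and]
      omega
    have hdisj : Disjoint (Finset.univ.filter fun u => G.dist v u ≤ r)
        (Finset.univ.filter fun u => G.dist v u = r + 1) := by
      rw [Finset.disjoint_left]
      intro u hu hu'
      simp only [Finset.mem_filter] at hu hu'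
      omega
    rw [hsplit, Finset.card_union_of_disjoint hdisj]
    have := sphere_bound G Δ hmax hconn v r
    have hMB : mooreBound Δ (r + 1) = mooreBound Δ r + Δ * (Δ - 1) ^ r := by
      simp [mooreBound, Finset.sum_range_succ, Nat.mul_add]; ring
    omega

/-- Let `G` be a graph on `n` vertices with maximum degree at most `Δ ≥ 3` and
diameter at most `k` with `k` odd, and suppose `(A, S, B)` is a separation of
order `s` in `G`. Then `n ≤ 3s · M(Δ, (k−1)/2)`. -/
theorem separation_odd_diameter {V : Type*} [Fintype V] [DecidableEq V] (G : SimpleGraph V)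
    (Δ k s : ℕ) (hΔ : 3 ≤ Δ) (hodd : Odd k)
    (hmax : ∀ v : V, (G.neighborSet v).ncard ≤ Δ)
    (hconn : G.Connected)
    (hdiam : ∀ u v : V, G.dist u v ≤ k)
    (A S B : Finset V)
    (hcover : A ∪ S ∪ B = Finset.univ)
    (hAS : Disjoint A S) (hAB : Disjoint A B) (hSB : Disjoint S B)
    (hA : 3 * A.card ≤ 2 * Fintype.card V)
    (hB : 3 * B.card ≤ 2 * Fintype.card V)
    (hS : S.card ≤ s)
    (hsep : ∀ a ∈ A, ∀ b ∈ B, ¬G.Adj a b) :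
    Fintype.card V ≤ 3 * s * mooreBound Δ ((k - 1) / 2) := by
  classical
  obtain ⟨m, hm⟩ := hodd
  have hr : (k - 1) / 2 = m := by omega
  rw [hr]
  set M := mooreBound Δ m with hMdef
  have hM1 : 1 ≤ M := Nat.le_add_right 1 _
  have hcard : A.card + S.card + B.card = Fintype.card V := by
    have h1 : Disjoint (A ∪ S) B := Finset.disjoint_union_left.mpr ⟨hAB, hSB⟩
    rw [← Finset.card_union_of_disjoint hAS, ← Finset.card_union_of_disjoint h1, hcover,
      Finset.card_univ]
  -- covered set bound
  have hCbound : (Finset.univ.filter fun x => ∃ t ∈ S, G.dist t x ≤ m).card ≤ s * M := by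
    have hsub : (Finset.univ.filter fun x => ∃ t ∈ S, G.dist t x ≤ m) ⊆
        S.biUnion (fun t => Finset.univ.filter fun x => G.dist t x ≤ m) := by
      intro x hx
      simp only [Finset.mem_filter, Finset.mem_univ, true_and] at hx
      obtain ⟨t, ht, htx⟩ := hx
      exact Finset.mem_biUnion.mpr ⟨t, ht, by simp [htx]⟩
    calc _ ≤ _ := Finset.card_le_card hsub
      _ ≤ S.card * M := Finset.card_biUnion_le_card_mul _ _ _
          (fun t _ => ball_bound G Δ hmax hconn t m)
      _ ≤ s * M := Nat.mul_le_mul_right _ hS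
  rcases A.eq_empty_or_nonempty with hAe | ⟨a₀, ha₀⟩
  · have : A.card = 0 := by simp [hAe]
    have : Fintype.card V ≤ 3 * s := by omega
    calc Fintype.card V ≤ 3 * s := this
      _ ≤ 3 * s * M := Nat.le_mul_of_pos_right _ hM1
  rcases B.eq_empty_or_nonempty with hBe | ⟨b₀, hb₀⟩
  · have : B.card = 0 := by simp [hBe]
    have : Fintype.card V ≤ 3 * s := by omega
    calc Fintype.card V ≤ 3 * s := this
      _ ≤ 3 * s * M := Nat.le_mul_of_pos_right _ hM1
  -- crossing lemma
  have hcross : ∀ {a b : V} (p : G.Walk a b), a ∈ A → b ∈ B → ∃ t ∈ S, t ∈ p.support := by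
    intro a b p
    induction p with
    | nil =>
      intro ha hb
      exact absurd hb (Finset.disjoint_left.mp hAB ha)
    | @cons a c b hadj q ih =>
      intro ha hb
      have hc : c ∈ A ∨ c ∈ S ∨ c ∈ B := by
        have : c ∈ A ∪ S ∪ B := hcover ▸ Finset.mem_univ c
        simpa [Finset.mem_union, or_assoc] using this
      rcases hc with hc | hc | hc
      · obtain ⟨t, htS, htm⟩ := ih hc hb
        exact ⟨t, htS, by simp [SimpleGraph.Walk.support_cons, htm]⟩
      · exact ⟨c, hc, by simp [SimpleGraph.Walk.support_cons]⟩
      · exact absurd hadj (hsep a ha c hc)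
  have hsplit : ∀ {a b : V} (p : G.Walk a b) (t : V), t ∈ p.support →
      G.dist a t + G.dist t b ≤ p.length := by
    intro a b p t ht
    have hspec := p.take_spec ht
    have hlen : (p.takeUntil t ht).length + (p.dropUntil t ht).length = p.length := by
      rw [← SimpleGraph.Walk.length_append, hspec]
    calc G.dist a t + G.dist t b
        ≤ (p.takeUntil t ht).length + (p.dropUntil t ht).length :=
          Nat.add_le_add (SimpleGraph.dist_le _) (SimpleGraph.dist_le _)
      _ = p.length := hlen
  -- one side is covered
  have hcov : (∀ x ∈ A, ∃ t ∈ S, G.dist t x ≤ m) ∨ (∀ x ∈ B, ∃ t ∈ S, G.dist t x ≤ m) := by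
    by_cases hcA : ∀ x ∈ A, ∃ t ∈ S, G.dist t x ≤ m
    · exact Or.inl hcA
    · right
      push_neg at hcA
      obtain ⟨a, ha, hfar⟩ := hcA
      intro b hb
      obtain ⟨p, hp⟩ := (hconn a b).exists_walk_length_eq_dist
      obtain ⟨t, htS, htsup⟩ := hcross p ha hb
      have h1 : G.dist a t + G.dist t b ≤ p.length := hsplit p t htsup
      have h2 : m < G.dist t a := hfar t htS
      have h3 : G.dist a t = G.dist t a := SimpleGraph.dist_comm
      have h4 : p.length ≤ k := hp ▸ hdiam a b
      exact ⟨t, htS, by omega⟩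
  have key : ∀ (X : Finset V), Disjoint X S → (∀ x ∈ X, ∃ t ∈ S, G.dist t x ≤ m) →
      X.card + S.card ≤ s * M := by
    intro X hXS hXcov
    have hsub : X ∪ S ⊆ Finset.univ.filter fun x => ∃ t ∈ S, G.dist t x ≤ m := by
      intro x hx
      simp only [Finset.mem_filter, Finset.mem_univ, true_and]
      rcases Finset.mem_union.mp hx with hx | hx
      · exact hXcov x hx
      · have h0 : G.dist x x = 0 := SimpleGraph.dist_self
        exact ⟨x, hx, by omega⟩
    calc X.card + S.card = (X ∪ S).card := (Finset.card_union_of_disjoint hXS).symm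
      _ ≤ _ := Finset.card_le_card hsub
      _ ≤ s * M := hCbound
  have hlin : 3 * s * M = 3 * (s * M) := by ring
  rcases hcov with hcov | hcov
  · have := key A hAS hcov
    omega
  · have := key B hSB.symm hcov
    omega
end
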